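/- arXiv:1803.08347 — 5 statements merged into one kernel-verified Lean document; each statement's English description precedes it below -/
import Mathlib

section
/- Let G be an abelian group. If G is torsion-free, then G has the matching property: for any two non-empty finite subsets A and B of G with |A| = |B| and 0 ∉ B, there exists a matching from A to B. -/
/-- A matching from `A` to `B` in an additive abelian group is a bijection
`f : A → B` (encoded as a function `G → G` that is bijective from `A` to `B`)
such that `a + f a ∉ A` for every `a ∈ A`. -/
def IsMatching {G : Type*} [AddCommGroup G] (A B : Finset G) (f : G → G) : Prop :=
  Set.BijOn f (A : Set G) (B : Set G) ∧ ∀ a ∈ A, a + f a ∉ A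

/-- The older Mathlib's `AddMonoid.IsTorsionFree` (removed since): no nonzero element has
finite additive order. -/
def AddMonoid.IsTorsionFree (G : Type*) [AddMonoid G] : Prop :=
  ∀ g : G, g ≠ 0 → ¬IsOfFinAddOrder g

/-!
A torsion-free abelian group embeds in the `ℚ`-vector space `DivisibleHull G`, so a single
additive map `φ : G → ℚ` is nonzero on all of `B`. Given a nonempty `S ⊆ A`, let `T` be the set
of `b ∈ B` with `S + b ⊆ A`. If `aMin, aMax ∈ S` minimise and maximise `φ` on `S`, then
`aMin + {t ∈ T | φ t < 0}`, `S` and `aMax + {t ∈ T | 0 < φ t}` are disjoint subsets of `A`,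
separated by the values of `φ`; hence `|S| + |T| ≤ |A| = |B|`. Every `b ∈ B \ T` satisfies
`a + b ∉ A` for some `a ∈ S`, so this is Hall's condition, and Hall's theorem gives an injection
`A → B` avoiding `A`, which is a bijection because `|A| = |B|`.
-/

open Finset

section

variable {G : Type*} [AddCommGroup G]

theorem exists_addMonoidHom_rat_forall_ne_zero [IsAddTorsionFree G] {B : Finset G}
    (hB : (0 : G) ∉ B) : ∃ φ : G →+ ℚ, ∀ b ∈ B, φ b ≠ 0 := by
  let ι := DivisibleHull.coeAddMonoidHom G
  obtain ⟨f, hf⟩ := Module.exists_dual_forall_apply_ne_zero (K := ℚ) (fun b : B ↦ ι b)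
    fun b ↦ (map_ne_zero_iff ι DivisibleHull.coe_injective).mpr (ne_of_mem_of_not_mem b.2 hB)
  exact ⟨f.toAddMonoidHom.comp ι, fun b hb ↦ hf ⟨b, hb⟩⟩

section Ordered

variable {Γ : Type*} [AddCommGroup Γ] [LinearOrder Γ] [IsOrderedAddMonoid Γ]

theorem card_add_card_le_of_forall_add_mem [DecidableEq G] (φ : G →+ Γ) {A S T : Finset G}
    (hSA : S ⊆ A) (hS : S.Nonempty) (hT : ∀ t ∈ T, φ t ≠ 0)
    (hST : ∀ a ∈ S, ∀ t ∈ T, a + t ∈ A) : #S + #T ≤ #A := by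
  obtain ⟨aMin, haMin, hmin⟩ := S.exists_min_image φ hS
  obtain ⟨aMax, haMax, hmax⟩ := S.exists_max_image φ hS
  set L := {t ∈ T | φ t < 0}.image (aMin + ·)
  set U := {t ∈ T | ¬φ t < 0}.image (aMax + ·)
  have hL : ∀ x ∈ L, φ x < φ aMin := by
    simp only [L, mem_image, mem_filter]
    rintro _ ⟨t, ⟨-, ht⟩, rfl⟩
    simpa using ht
  have hU : ∀ x ∈ U, φ aMax < φ x := by
    simp only [U, mem_image, mem_filter]
    rintro _ ⟨t, ⟨htT, ht⟩, rfl⟩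
    simpa using lt_of_le_of_ne (not_lt.mp ht) (hT t htT).symm
  have hLS : Disjoint L S := disjoint_left.mpr fun x hx hxS ↦ (hL x hx).not_ge (hmin x hxS)
  have hLSU : Disjoint (L ∪ S) U := by
    refine disjoint_left.mpr fun x hx hxU ↦ (hU x hxU).not_ge ?_
    rcases mem_union.mp hx with hxL | hxS
    · exact (hL x hxL).le.trans (hmin aMax haMax)
    · exact hmax x hxS
  have hsub : L ∪ S ∪ U ⊆ A :=
    union_subset (union_subset (image_subset_iff.mpr fun t ht ↦ hST _ haMin t (mem_filter.mp ht).1)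
      hSA) (image_subset_iff.mpr fun t ht ↦ hST _ haMax t (mem_filter.mp ht).1)
  calc #S + #T = #L + #S + #U := by
        rw [card_image_of_injective _ (add_right_injective _),
          card_image_of_injective _ (add_right_injective _), add_right_comm,
          card_filter_add_card_filter_not, add_comm]
    _ = #(L ∪ S ∪ U) := by rw [card_union_of_disjoint hLSU, card_union_of_disjoint hLS]
    _ ≤ #A := card_le_card hsub

theorem card_le_card_biUnion_of_addMonoidHom [DecidableEq G] (φ : G →+ Γ) {A B : Finset G}
    (hB : ∀ b ∈ B, φ b ≠ 0) (hcard : #A = #B) {S : Finset G} (hSA : S ⊆ A) :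
    #S ≤ #(S.biUnion fun a ↦ {b ∈ B | a + b ∉ A}) := by
  obtain rfl | hS := S.eq_empty_or_nonempty
  · simp
  set T := {b ∈ B | ∀ a ∈ S, a + b ∈ A}
  have hST : #S + #T ≤ #A :=
    card_add_card_le_of_forall_add_mem φ hSA hS (fun t ht ↦ hB t (mem_filter.mp ht).1)
      fun a ha t ht ↦ (mem_filter.mp ht).2 a ha
  have hsub : B \ T ⊆ S.biUnion fun a ↦ {b ∈ B | a + b ∉ A} := by
    intro b hb
    simp only [T, mem_sdiff, mem_filter, not_and, not_forall] at hb
    obtain ⟨a, ha, hab⟩ := hb.2 hb.1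
    exact mem_biUnion.mpr ⟨a, ha, mem_filter.mpr ⟨hb.1, hab⟩⟩
  calc #S ≤ #B - #T := by omega
    _ = #(B \ T) := (card_sdiff_of_subset (filter_subset _ _)).symm
    _ ≤ _ := card_le_card hsub

end Ordered

theorem exists_isMatching_of_forall_card_le_card_biUnion [DecidableEq G] {A B : Finset G}
    (hcard : #A = #B) (hall : ∀ S ⊆ A, #S ≤ #(S.biUnion fun a ↦ {b ∈ B | a + b ∉ A})) :
    ∃ f : G → G, IsMatching A B f := by
  obtain ⟨g, hg, hgB⟩ := (all_card_le_biUnion_card_iff_exists_injective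
    fun a : A ↦ {b ∈ B | (a : G) + b ∉ A}).mp fun s ↦ by
      simpa [image_biUnion, card_image_of_injective _ Subtype.val_injective]
        using hall (s.image Subtype.val) (image_subset_iff.mpr fun a _ ↦ a.2)
  let f x := if h : x ∈ A then g ⟨x, h⟩ else x
  have hf : ∀ a (ha : a ∈ A), f a = g ⟨a, ha⟩ := fun a ha ↦ dif_pos ha
  have hmaps : Set.MapsTo f A B := fun a ha ↦ by
    rw [hf a ha]; exact (mem_filter.mp (hgB _)).1
  have hinj : Set.InjOn f A := fun a ha a' ha' h ↦ by
    rw [hf a ha, hf a' ha'] at h; exact congrArg Subtype.val (hg h)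
  refine ⟨f, ⟨hmaps, hinj, surjOn_of_injOn_of_card_le f hmaps hinj hcard.ge⟩, fun a ha ↦ ?_⟩
  rw [hf a ha]
  exact (mem_filter.mp (hgB ⟨a, ha⟩)).2

end

theorem torsionFree_hasMatchingProperty_general {G : Type*} [AddCommGroup G]
    (hG : AddMonoid.IsTorsionFree G)
    (A B : Finset G)
    (hcard : A.card = B.card) (h0 : (0 : G) ∉ B) :
    ∃ f : G → G, IsMatching A B f := by
  classical
  have : IsAddTorsionFree G := .of_not_isOfFinAddOrder fun g ↦ hG g
  obtain ⟨φ, hφ⟩ := exists_addMonoidHom_rat_forall_ne_zero h0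
  exact exists_isMatching_of_forall_card_le_card_biUnion hcard fun S hSA ↦
    card_le_card_biUnion_of_addMonoidHom φ hφ hcard hSA

/-- **Torsion-free abelian groups have the matching property.**
If `G` is a torsion-free abelian group, then for any two non-empty finite subsets
`A` and `B` of `G` with `|A| = |B|` and `0 ∉ B`, there exists a matching from `A` to `B`. -/
theorem torsionFree_hasMatchingProperty {G : Type*} [AddCommGroup G]
    (hG : AddMonoid.IsTorsionFree G)
    (A B : Finset G) (hA : A.Nonempty) (hB : B.Nonempty)
    (hcard : A.card = B.card) (h0 : (0 : G) ∉ B) :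
    ∃ f : G → G, IsMatching A B f :=
  torsionFree_hasMatchingProperty_general hG A B hcard h0
end

section
/- Let p be a prime. The cyclic group ℤ/pℤ has the matching property: for any two non-empty subsets A and B of ℤ/pℤ with |A| = |B| and 0 ∉ B, there exists a matching from A to B. -/
/-!
Matchings are Hall transversals of the relation `a + b ∉ A` between `A` and `B`. If Hall's
condition failed, some non-empty `S ⊆ A` would have too few neighbours, and the set `T` of
non-neighbours would satisfy `S + T ⊆ A`; since `0 ∉ B` and `S ⊆ A`, even `S + ({0} ∪ T) ⊆ A`.
As `|A| = |B| < p`, the Cauchy–Davenport theorem then forces `|S| + |T| ≤ |A| = |B|`, which says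
exactly that `S` has at least `|S|` neighbours.
-/

open Finset Pointwise

theorem Finset.exists_bijOn_of_card_le_card_filter {α β : Type*} [Nonempty β]
    {A : Finset α} {B : Finset β} (hcard : #A = #B) (r : α → β → Prop) [DecidableRel r]
    (hall : ∀ s ⊆ A, #s ≤ #{b ∈ B | ∃ a ∈ s, r a b}) :
    ∃ f : α → β, Set.BijOn f A B ∧ ∀ a ∈ A, r a (f a) := by
  obtain ⟨g, hg_inj, hg_rel⟩ :=
    (Fintype.all_card_le_filter_rel_iff_exists_injective fun (a : A) (b : B) => r a b).mp
      fun (s : Finset A) => by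
        have hfilter : ({b : B | ∃ a ∈ s, r a b} : Finset B).map (Function.Embedding.subtype _) =
            {b ∈ B | ∃ a ∈ s.map (Function.Embedding.subtype _), r a b} := by
          ext b
          simp [and_comm]
        calc #s = #(s.map (Function.Embedding.subtype _)) := (card_map _).symm
          _ ≤ _ := hall _ fun a ha => by
            obtain ⟨a, -, rfl⟩ := mem_map.mp ha
            exact a.2
          _ = _ := by rw [← hfilter, card_map]
  have hg_surj : Function.Surjective g :=
    ((Fintype.bijective_iff_injective_and_card g).mpr ⟨hg_inj, by simpa using hcard⟩).2
  classical
  let f : α → β := fun x => if h : x ∈ A then g ⟨x, h⟩ else Classical.arbitrary β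
  have hf : ∀ a (ha : a ∈ A), f a = g ⟨a, ha⟩ := fun a ha => dif_pos ha
  refine ⟨f, ⟨fun a ha => ?_, fun a ha a' ha' h => ?_, fun b hb => ?_⟩, fun a ha => ?_⟩
  · rw [hf a ha]
    exact (g _).2
  · rw [hf a ha, hf a' ha'] at h
    exact congrArg Subtype.val (hg_inj (Subtype.ext h))
  · obtain ⟨a, ha⟩ := hg_surj ⟨b, hb⟩
    exact ⟨a, a.2, by rw [hf a a.2, ha]⟩
  · rw [hf a ha]
    exact hg_rel ⟨a, ha⟩

theorem exists_isMatching_of_card_add_card_le {G : Type*} [AddCommGroup G] [DecidableEq G]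
    {A B : Finset G} (hcard : #A = #B)
    (h : ∀ S ⊆ A, ∀ T ⊆ B, S.Nonempty → S + T ⊆ A → #S + #T ≤ #A) :
    ∃ f : G → G, IsMatching A B f := by
  refine exists_bijOn_of_card_le_card_filter hcard (fun a b => a + b ∉ A) fun S hSA => ?_
  rcases S.eq_empty_or_nonempty with rfl | hS
  · simp
  have hsplit := card_filter_add_card_filter_not (s := B) fun b => ∃ a ∈ S, a + b ∉ A
  set T := {b ∈ B | ¬∃ a ∈ S, a + b ∉ A}
  have hST : S + T ⊆ A := by
    intro x hx
    obtain ⟨a, ha, b, hb, rfl⟩ := mem_add.mp hx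
    by_contra hab
    exact (mem_filter.mp hb).2 ⟨a, ha, hab⟩
  have := h S hSA T (filter_subset _ _) hS hST
  omega

theorem ZMod.card_add_card_le_of_add_subset {p : ℕ} (hp : p.Prime) {A S T : Finset (ZMod p)}
    (hAp : #A < p) (hS : S.Nonempty) (h0 : 0 ∉ T) (hSA : S ⊆ A) (hST : S + T ⊆ A) :
    #S + #T ≤ #A := by
  have hsub : S + insert 0 T ⊆ A := by
    intro x hx
    obtain ⟨a, ha, b, hb, rfl⟩ := mem_add.mp hx
    rcases mem_insert.mp hb with rfl | hb
    · simpa using hSA ha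
    · exact hST (add_mem_add ha hb)
  have hcd := ZMod.cauchy_davenport hp hS (insert_nonempty 0 T)
  have := card_le_card hsub
  rw [card_insert_of_notMem h0] at hcd
  omega

theorem zmod_prime_hasMatchingProperty_general (p : ℕ) (hp : p.Prime)
    (A B : Finset (ZMod p))
    (hcard : A.card = B.card) (h0 : (0 : ZMod p) ∉ B) :
    ∃ f : ZMod p → ZMod p, IsMatching A B f := by
  have : NeZero p := ⟨hp.ne_zero⟩
  have hAp : #A < p := by
    simpa [hcard, ZMod.card] using card_lt_univ_of_notMem h0
  exact exists_isMatching_of_card_add_card_le hcard fun S hSA T hTB hS hST =>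
    ZMod.card_add_card_le_of_add_subset hp hAp hS (fun h => h0 (hTB h)) hSA hST

/-- **`ℤ/pℤ` has the matching property for `p` prime.**
For any two non-empty subsets `A` and `B` of `ℤ/pℤ` with `|A| = |B|` and `0 ∉ B`,
there exists a matching from `A` to `B`. -/
theorem zmod_prime_hasMatchingProperty (p : ℕ) (hp : p.Prime)
    (A B : Finset (ZMod p)) (hA : A.Nonempty) (hB : B.Nonempty)
    (hcard : A.card = B.card) (h0 : (0 : ZMod p) ∉ B) :
    ∃ f : ZMod p → ZMod p, IsMatching A B f :=
  zmod_prime_hasMatchingProperty_general p hp A B hcard h0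
end

section
/- Let G be an abelian group which has the matching property. Then G is either torsion-free or a cyclic group of prime order. -/
/-- `G` has the matching property if for any non-empty finite subsets `A`, `B` of `G`
with `|A| = |B|` and `0 ∉ B`, there exists at least one matching from `A` to `B`. -/
def HasMatchingProperty (G : Type*) [AddCommGroup G] : Prop :=
  ∀ A B : Finset G, A.Nonempty → B.Nonempty → A.card = B.card → (0 : G) ∉ B →
    ∃ f : G → G, IsMatching A B f

/-!
An element of finite order yields a nonzero finite subgroup `H`; if some `g ∉ H` existed, take
`A = H` and `B = (H \ {0}) ∪ {g}`. Since `H` is closed under addition, a matching must send every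
`a ∈ H` outside `H`, hence to `g`, contradicting injectivity. So `G` is finite and generated by an
element of prime order.
-/

theorem IsMatching.apply_notMem {G : Type*} [AddCommGroup G] {A B : Finset G} {f : G → G}
    (hf : IsMatching A B f) (hA : ∀ a ∈ A, ∀ b ∈ A, a + b ∈ A) {a : G} (ha : a ∈ A) :
    f a ∉ A :=
  fun hfa => hf.2 a ha (hA a ha _ hfa)

theorem HasMatchingProperty.eq_top_of_finite {G : Type*} [AddCommGroup G]
    (hG : HasMatchingProperty G) {H : AddSubgroup G} (hfin : (H : Set G).Finite) (hH : H ≠ ⊥) :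
    H = ⊤ := by
  classical
  by_contra hHtop
  obtain ⟨g, hg⟩ : ∃ g, g ∉ H := by simpa [AddSubgroup.eq_top_iff'] using hHtop
  obtain ⟨y, hyH, hy0⟩ := H.bot_or_exists_ne_zero.resolve_left hH
  set A := hfin.toFinset
  have hmem : ∀ a, a ∈ A ↔ a ∈ H := fun a => hfin.mem_toFinset
  have h0A : (0 : G) ∈ A := (hmem 0).2 H.zero_mem
  have hgA : g ∉ A := fun h => hg ((hmem g).1 h)
  set B := insert g (A.erase 0)
  have hcard : A.card = B.card := by
    rw [Finset.card_insert_of_notMem (fun h => hgA (Finset.mem_of_mem_erase h)),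
      Finset.card_erase_add_one h0A]
  have h0B : (0 : G) ∉ B := by
    simp only [B, Finset.mem_insert, Finset.mem_erase, ne_eq, not_true_eq_false, false_and,
      or_false]
    exact fun h => hg (h ▸ H.zero_mem)
  obtain ⟨f, hf⟩ := hG A B ⟨0, h0A⟩ ⟨g, Finset.mem_insert_self _ _⟩ hcard h0B
  have hA : ∀ a ∈ A, ∀ b ∈ A, a + b ∈ A := fun a ha b hb =>
    (hmem _).2 (H.add_mem ((hmem a).1 ha) ((hmem b).1 hb))
  have hfg : ∀ a ∈ A, f a = g := by
    intro a ha
    have hfB : f a ∈ B := hf.1.mapsTo ha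
    have hfA : f a ∉ A := hf.apply_notMem hA ha
    simp only [B, Finset.mem_insert, Finset.mem_erase] at hfB
    tauto
  have hyA : y ∈ A := (hmem y).2 hyH
  exact hy0 (hf.1.injOn hyA h0A (by rw [hfg y hyA, hfg 0 h0A]))

theorem IsOfFinAddOrder.exists_prime_addOrderOf {G : Type*} [AddMonoid G] {x : G}
    (hx : IsOfFinAddOrder x) (hx0 : x ≠ 0) : ∃ y : G, (addOrderOf y).Prime := by
  have hp : (addOrderOf x).minFac.Prime :=
    Nat.minFac_prime fun h => hx0 (AddMonoid.addOrderOf_eq_one_iff.mp h)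
  have hdvd : addOrderOf x / (addOrderOf x).minFac ∣ addOrderOf x :=
    Nat.div_dvd_of_dvd (Nat.minFac_dvd _)
  refine ⟨(addOrderOf x / (addOrderOf x).minFac) • x, ?_⟩
  rwa [addOrderOf_nsmul_of_dvd (Nat.div_pos (Nat.minFac_le hx.addOrderOf_pos) hp.pos).ne' hdvd,
    Nat.div_div_self (Nat.minFac_dvd _) hx.addOrderOf_pos.ne']

/-- **Groups with the matching property are torsion-free or cyclic of prime order.**
If an abelian group `G` has the matching property, then `G` is either torsion-free
or a cyclic group of prime order. -/
theorem hasMatchingProperty_torsionFree_or_prime_cyclic (G : Type*) [AddCommGroup G]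
    (hG : HasMatchingProperty G) :
    AddMonoid.IsTorsionFree G ∨ (IsAddCyclic G ∧ ∃ p : ℕ, p.Prime ∧ Nat.card G = p) := by
  refine or_iff_not_imp_left.mpr fun htf => ?_
  obtain ⟨x, hx0, hx⟩ : ∃ x : G, x ≠ 0 ∧ IsOfFinAddOrder x := by
    simpa [AddMonoid.IsTorsionFree] using htf
  obtain ⟨y, hy⟩ := hx.exists_prime_addOrderOf hx0
  have hy0 : y ≠ 0 := fun h => hy.ne_one (by simp [h])
  have htop : AddSubgroup.zmultiples y = ⊤ :=
    hG.eq_top_of_finite (addOrderOf_pos_iff.1 hy.pos).finite_zmultiples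
      (AddSubgroup.zmultiples_ne_bot.2 hy0)
  exact ⟨isAddCyclic_iff_exists_zmultiples_eq_top.2 ⟨y, htop⟩, _, hy,
    (addOrderOf_eq_card_of_zmultiples_eq_top htop).symm⟩
end

section
/- Let K ⊆ L be a field extension such that L contains no intermediate field M with K ⊊ M and M finite-dimensional over K. Then the extension K ⊆ L has the linear matching property: for any two n-dimensional K-subspaces A and B of L with n ≥ 1 and 1 ∉ B, A is matched to B. -/
open scoped Pointwise

/-- A basis `𝒜` of `A` is matched to a basis `ℬ` of `B` if for every `i`,
`aᵢ⁻¹A ∩ B ⊆ ⟨b₁, …, b̂ᵢ, …, bₙ⟩` (the `K`-span of the `bⱼ` with `j ≠ i`). -/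
def IsMatchedBasis {K L : Type*} [Field K] [Field L] [Algebra K L] {n : ℕ}
    (A B : Subspace K L) (𝒜 : Module.Basis (Fin n) K A) (ℬ : Module.Basis (Fin n) K B) : Prop :=
  ∀ i : Fin n,
    ((𝒜 i : L)⁻¹ • (A : Set L)) ∩ (B : Set L) ⊆
      (Submodule.span K (Set.range fun j : {j : Fin n // j ≠ i} => (ℬ j.1 : L)) : Set L)

/-- `A` is matched to `B` if for every basis `𝒜` of `A` there exists a basis `ℬ` of `B`
such that `𝒜` is matched to `ℬ`. -/
def IsMatchedTo {K L : Type*} [Field K] [Field L] [Algebra K L] (A B : Subspace K L) : Prop :=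
  ∀ (n : ℕ) (𝒜 : Module.Basis (Fin n) K A), ∃ ℬ : Module.Basis (Fin n) K B, IsMatchedBasis A B 𝒜 ℬ

/-!
Fix a basis `a` of `A` and put `Dᵢ = aᵢ⁻¹A ∩ B`. Through the annihilators of the `Dᵢ` in the dual
of `B`, Rado's theorem reduces the existence of a matched basis to the dimension criterion
`dim ⋂_{i ∈ S} Dᵢ + |S| ≤ n` for nonempty `S`. For `C = ⋂_{i ∈ S} Dᵢ` and
`V = span {aᵢ | i ∈ S}` we have `V (C + K) ⊆ A`, and `dim (C + K) = dim C + 1` as `1 ∉ B`, so the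
criterion follows from the linear Cauchy–Davenport inequality `dim V + dim W ≤ dim VW + 1`. That
inequality is proved by induction on `dim W` via Dyson's e-transform `(V, W) ↦ (V + gW, W ∩ g⁻¹V)`;
the induction can only get stuck when `W` stabilises `V`, and then the stabiliser of `V` is a
finite-dimensional intermediate field containing `W`, so `W = K` by hypothesis.
-/

open Module Submodule Finset

section LinearAlgebra

variable {K E : Type*} [Field K] [AddCommGroup E] [Module K E]

theorem Submodule.finrank_map_add_finrank_inf_ker {E' : Type*} [AddCommGroup E'] [Module K E']
    (f : E →ₗ[K] E') (X : Submodule K E) [FiniteDimensional K X] :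
    finrank K (X.map f) + finrank K ↥(X ⊓ LinearMap.ker f) = finrank K X := by
  rw [← LinearMap.range_domRestrict, ← LinearMap.finrank_range_add_finrank_ker (f.domRestrict X),
    LinearMap.ker_domRestrict, ← finrank_map_subtype_eq, map_comap_subtype]

theorem Submodule.finrank_map_mkQ_add_finrank [FiniteDimensional K E] (F X : Submodule K E) :
    finrank K (X.map F.mkQ) + finrank K F = finrank K ↥(X ⊔ F) := by
  have h := X.finrank_map_add_finrank_inf_ker F.mkQ
  rw [ker_mkQ] at h
  have := finrank_sup_add_finrank_inf_eq X F
  omega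

theorem Submodule.finrank_finset_sup_map_mkQ_add_finrank [FiniteDimensional K E] {ι : Type*}
    (F : Submodule K E) (W : ι → Submodule K E) (u : Finset ι) :
    finrank K ↥(u.sup fun i => (W i).map F.mkQ) + finrank K F = finrank K ↥(u.sup W ⊔ F) := by
  rw [← finrank_map_mkQ_add_finrank]
  congr 3 <;> simp only [Finset.sup_eq_iSup, map_iSup]

theorem exists_linearIndepOn_of_quotient {ι : Type*} [DecidableEq ι] {W : ι → Submodule K E}
    (F : Submodule K E) {s t : Finset ι} (hts : t ⊆ s)
    (ht : ∃ φ : ι → E, (∀ i ∈ t, φ i ∈ W i ⊓ F) ∧ LinearIndepOn K φ t)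
    (hst : ∃ ψ : ι → E ⧸ F, (∀ i ∈ s \ t, ψ i ∈ (W i).map F.mkQ) ∧ LinearIndepOn K ψ ↑(s \ t)) :
    ∃ φ : ι → E, (∀ i ∈ s, φ i ∈ W i) ∧ LinearIndepOn K φ s := by
  obtain ⟨φ, hφW, hφ⟩ := ht
  obtain ⟨ψ, hψW, hψ⟩ := hst
  have hlift : ∀ i, ∃ x ∈ W i, i ∈ s \ t → F.mkQ x = ψ i := fun i => by
    by_cases hi : i ∈ s \ t
    · obtain ⟨x, hx, hxψ⟩ := mem_map.mp (hψW i hi)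
      exact ⟨x, hx, fun _ => hxψ⟩
    · exact ⟨0, zero_mem _, fun h => absurd h hi⟩
  choose χ hχW hχψ using hlift
  have hφt : ∀ i ∈ t, t.piecewise φ χ i = φ i := fun i hi => piecewise_eq_of_mem _ _ _ hi
  have hχst : ∀ i ∈ s \ t, t.piecewise φ χ i = χ i := fun i hi =>
    piecewise_eq_of_notMem _ _ _ (mem_sdiff.mp hi).2
  refine ⟨t.piecewise φ χ, fun i hi => ?_, ?_⟩
  · by_cases hit : i ∈ t
    · exact hφt i hit ▸ (hφW i hit).1
    · exact hχst i (mem_sdiff.mpr ⟨hi, hit⟩) ▸ hχW i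
  · have hspan : span K (t.piecewise φ χ '' t) ≤ F :=
      span_le.mpr (by rintro _ ⟨i, hi, rfl⟩; exact hφt i hi ▸ (hφW i hi).2)
    rw [← union_sdiff_of_subset hts, coe_union]
    refine (hφ.congr fun i hi => (hφt i hi).symm).union_of_quotient ?_
    refine LinearIndepOn.of_comp ((span K _).mapQ F LinearMap.id hspan) ?_
    exact hψ.congr fun i hi => by simp [hχst i hi, ← hχψ i hi]

/-- Rado's theorem for vector spaces. -/
theorem exists_linearIndepOn_of_hall [FiniteDimensional K E] {ι : Type*}
    (W : ι → Submodule K E) (s : Finset ι) (hW : ∀ t ⊆ s, #t ≤ finrank K ↥(t.sup W)) :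
    ∃ φ : ι → E, (∀ i ∈ s, φ i ∈ W i) ∧ LinearIndepOn K φ s := by
  classical
  induction s using Finset.strongInduction generalizing E with
  | H s ih =>
  -- Split off either a critical set `t` or, if there is none, a single index.
  by_cases hcrit : ∃ t ⊂ s, t.Nonempty ∧ finrank K ↥(t.sup W) ≤ #t
  · obtain ⟨t, hts, htne, htW⟩ := hcrit
    refine exists_linearIndepOn_of_quotient (t.sup W) hts.subset ?_
      (ih (s \ t) (sdiff_ssubset hts.subset htne) _ fun u hu => ?_)
    · obtain ⟨φ, hφW, hφ⟩ := ih t hts W fun u hu => hW u (hu.trans hts.subset)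
      exact ⟨φ, fun i hi => ⟨hφW i hi, le_sup (f := W) hi (hφW i hi)⟩, hφ⟩
    · have h := hW (u ∪ t) (union_subset (hu.trans sdiff_subset) hts.subset)
      rw [card_union_of_disjoint (disjoint_of_subset_left hu sdiff_disjoint), sup_union] at h
      have := finrank_finset_sup_map_mkQ_add_finrank (t.sup W) W u
      omega
  · push Not at hcrit
    rcases s.eq_empty_or_nonempty with rfl | ⟨i₀, hi₀⟩
    · exact ⟨0, by simp, by simp⟩
    obtain ⟨w, hw, hw0⟩ : ∃ w ∈ W i₀, w ≠ 0 := by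
      refine exists_mem_ne_zero_of_ne_bot fun h => ?_
      simpa [h] using hW {i₀} (by simpa using hi₀)
    have hsi₀ : s \ {i₀} ⊂ s := sdiff_ssubset (singleton_subset_iff.mpr hi₀) (singleton_nonempty _)
    refine exists_linearIndepOn_of_quotient (K ∙ w) (singleton_subset_iff.mpr hi₀)
      ⟨fun _ => w, fun i hi => mem_singleton.mp hi ▸ ⟨hw, mem_span_singleton_self w⟩,
        by rw [coe_singleton]; exact .singleton hw0⟩
      (ih (s \ {i₀}) hsi₀ _ fun u hu => ?_)
    rcases u.eq_empty_or_nonempty with rfl | hune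
    · simp
    have := hcrit u (hu.trans_ssubset hsi₀) hune
    have := finrank_finset_sup_map_mkQ_add_finrank (K ∙ w) W u
    have := finrank_mono (le_sup_left : u.sup W ≤ u.sup W ⊔ (K ∙ w))
    rw [finrank_span_singleton hw0] at *
    omega

theorem Submodule.finrank_sup_map_add_finrank_inf_comap {f : E →ₗ[K] E} (hf : Function.Bijective f)
    (V W : Submodule K E) [FiniteDimensional K V] [FiniteDimensional K W] :
    finrank K ↥(V ⊔ W.map f) + finrank K ↥(W ⊓ V.comap f) = finrank K V + finrank K W := by
  have hmap : ∀ X : Submodule K E, finrank K (X.map f) = finrank K X := fun X =>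
    (LinearEquiv.finrank_eq (equivMapOfInjective f hf.1 X)).symm
  have hinf : finrank K ↥(W ⊓ V.comap f) = finrank K ↥(V ⊓ W.map f) := by
    rw [← hmap, map_inf _ hf.1, map_comap_eq_of_surjective hf.2, inf_comm]
  have := finrank_sup_add_finrank_inf_eq V (W.map f)
  have := hmap W
  omega

theorem Subspace.dualAnnihilator_finset_inf_eq {ι : Type*} (t : Finset ι) (D : ι → Subspace K E) :
    (t.inf D).dualAnnihilator = t.sup fun i => (D i).dualAnnihilator := by
  classical
  induction t using Finset.induction_on with
  | empty => simp
  | insert a t _ ih => rw [inf_insert, sup_insert, Subspace.dualAnnihilator_inf_eq, ih]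

/-- The basis `b` is the one whose coordinate functionals form a Rado transversal of the
annihilators of the `D i`. -/
theorem exists_basis_forall_le_span_image_compl [FiniteDimensional K E] {ι : Type*} [Fintype ι]
    [DecidableEq ι] (hι : Fintype.card ι = finrank K E) (D : ι → Submodule K E)
    (hD : ∀ t : Finset ι, t.Nonempty → finrank K ↥(t.inf D) + #t ≤ finrank K E) :
    ∃ b : Basis ι K E, ∀ i, D i ≤ span K (b '' {i}ᶜ) := by
  obtain ⟨φ, hφD, hφ⟩ := exists_linearIndepOn_of_hall (fun i => (D i).dualAnnihilator) univ
    fun t _ => by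
      rcases t.eq_empty_or_nonempty with rfl | ht
      · simp
      rw [← Subspace.dualAnnihilator_finset_inf_eq]
      have := Subspace.finrank_add_finrank_dualAnnihilator_eq (t.inf D)
      have := hD t ht
      omega
  rw [coe_univ, linearIndepOn_univ_iff] at hφ
  let Φ := basisOfLinearIndependentOfCardEqFinrank' φ hφ (by rwa [Subspace.dual_finrank_eq])
  let b := Φ.dualBasis.map (evalEquiv K E).symm
  have hb : ∀ x j, b.repr x j = φ j x := fun x j => by simp [b, Φ, Basis.dualBasis_repr]
  refine ⟨b, fun i x hx => b.mem_span_image.mpr fun j hj hji => ?_⟩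
  rw [mem_coe, Finsupp.mem_support_iff, hb, Set.mem_singleton_iff.mp hji] at hj
  exact hj ((mem_dualAnnihilator _).mp (hφD i (mem_univ i)) x hx)

end LinearAlgebra

theorem Submodule.sup_map_mulLeft_mul_inf_comap_mulLeft_le {R A : Type*} [CommSemiring R]
    [CommSemiring A] [Algebra R A] (g : A) (V W : Submodule R A) :
    (V ⊔ W.map (LinearMap.mulLeft R g)) * (W ⊓ V.comap (LinearMap.mulLeft R g)) ≤ V * W := by
  refine mul_le.mpr fun y hy b hb => ?_
  obtain ⟨v, hv, _, ⟨w, hw, rfl⟩, rfl⟩ := mem_sup.mp hy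
  have hgb : g * b ∈ V := hb.2
  have : (v + g * w) * b = v * b + g * b * w := by ring
  simpa [this] using add_mem (mul_mem_mul hv hb.1) (mul_mem_mul hgb hw)

section FieldExtension

variable {K L : Type*} [Field K] [Field L] [Algebra K L]

theorem Submodule.le_one_of_mul_le
    (hKL : ¬ ∃ M : IntermediateField K L, M ≠ ⊥ ∧ FiniteDimensional K M)
    {V W : Submodule K L} [FiniteDimensional K V] (hV : V ≠ ⊥) (hVW : V * W ≤ V) : W ≤ 1 := by
  obtain ⟨v₀, hv₀, hv₀0⟩ := exists_mem_ne_zero_of_ne_bot hV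
  let H : Subalgebra K L :=
    { carrier := {x | ∀ v ∈ V, x * v ∈ V}
      mul_mem' := fun ha hb v hv => by rw [mul_assoc]; exact ha _ (hb v hv)
      one_mem' := fun v hv => by rwa [one_mul]
      add_mem' := fun ha hb v hv => by rw [add_mul]; exact add_mem (ha v hv) (hb v hv)
      zero_mem' := fun v _ => by rw [zero_mul]; exact V.zero_mem
      algebraMap_mem' := fun r v hv => by rw [← Algebra.smul_def]; exact V.smul_mem r hv }
  have hWH : ∀ x ∈ W, x ∈ H := fun x hx v hv => mul_comm v x ▸ hVW (mul_mem_mul hv hx)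
  let f : H →ₗ[K] V :=
    { toFun := fun x => ⟨x * v₀, x.2 v₀ hv₀⟩
      map_add' := fun x y => by ext; simp [add_mul]
      map_smul' := fun c x => by ext; simp }
  have : FiniteDimensional K H :=
    .of_injective f fun x y hxy => Subtype.ext (mul_right_cancel₀ hv₀0 (congrArg Subtype.val hxy))
  let M := H.toIntermediateField fun x hx =>
    H.inv_mem_of_algebraic (x := ⟨x, hx⟩) (IsIntegral.isAlgebraic (.of_mem_of_fg H
      ((fg_iff_finiteDimensional _).mpr this) x hx))
  have hM : M = ⊥ := by
    by_contra hM
    exact hKL ⟨M, hM, this⟩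
  intro x hx
  obtain ⟨k, rfl⟩ := IntermediateField.mem_bot.mp (hM ▸ hWH x hx : x ∈ (⊥ : IntermediateField K L))
  exact mem_one.mpr ⟨k, rfl⟩

theorem finrank_add_finrank_le_finrank_mul_add_one
    (hKL : ¬ ∃ M : IntermediateField K L, M ≠ ⊥ ∧ FiniteDimensional K M)
    {V W : Submodule K L} [FiniteDimensional K V] [FiniteDimensional K W]
    (hV : V ≠ ⊥) (hW : (1 : L) ∈ W) :
    finrank K V + finrank K W ≤ finrank K ↥(V * W) + 1 := by
  induction h : finrank K W using Nat.strong_induction_on generalizing V W with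
  | _ m ih =>
  have : FiniteDimensional K ↥(V * W) := by
    rw [← fg_iff_finiteDimensional] at *
    exact ‹(V : Submodule K L).FG›.mul ‹(W : Submodule K L).FG›
  have hVVW : V ≤ V * W := fun v hv => by simpa using mul_mem_mul hv hW
  have := finrank_mono hVVW
  by_cases hW1 : W ≤ 1
  · rw [one_eq_span] at hW1
    have := finrank_mono hW1
    rw [finrank_span_singleton one_ne_zero] at this
    omega
  obtain ⟨g, hg, x, hx, hgx⟩ : ∃ g ∈ V, ∃ x ∈ W, g * x ∉ V := by
    by_contra! h
    exact hW1 (le_one_of_mul_le hKL hV (mul_le.mpr h))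
  have hg0 : g ≠ 0 := by rintro rfl; simp at hgx
  have hf : Function.Bijective (LinearMap.mulLeft K g) := (Equiv.mulLeft₀ g hg0).bijective
  have hW'W : W ⊓ V.comap (LinearMap.mulLeft K g) < W := inf_lt_left.mpr fun h => hgx (h hx)
  have := finrank_lt_finrank_of_lt hW'W
  have := ih _ (h ▸ this) (V := V ⊔ W.map (LinearMap.mulLeft K g))
    (W := W ⊓ V.comap (LinearMap.mulLeft K g)) (ne_bot_of_le_ne_bot hV le_sup_left)
    ⟨hW, by simpa using hg⟩ rfl
  have := finrank_mono (sup_map_mulLeft_mul_inf_comap_mulLeft_le g V W)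
  have := finrank_sup_map_add_finrank_inf_comap hf V W
  omega

theorem finrank_add_finrank_le_of_mul_le
    (hKL : ¬ ∃ M : IntermediateField K L, M ≠ ⊥ ∧ FiniteDimensional K M)
    {A V C : Submodule K L} [FiniteDimensional K A] [FiniteDimensional K C]
    (hV : V ≠ ⊥) (hC : (1 : L) ∉ C) (hVA : V ≤ A) (hVCA : V * C ≤ A) :
    finrank K V + finrank K C ≤ finrank K A := by
  have : FiniteDimensional K V := Submodule.finiteDimensional_of_le hVA
  have hdisj : Disjoint C (K ∙ 1) := (disjoint_span_singleton' one_ne_zero).mpr hC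
  have hW := finrank_sup_add_finrank_inf_eq C (K ∙ 1)
  rw [hdisj.eq_bot, finrank_bot, finrank_span_singleton one_ne_zero] at hW
  have hVW : V * (C ⊔ K ∙ 1) ≤ A := by
    rwa [Submodule.mul_sup, ← one_eq_span, Submodule.mul_one, sup_le_iff, and_iff_left hVA]
  have := finrank_add_finrank_le_finrank_mul_add_one hKL hV
    (mem_sup_right (mem_span_singleton_self 1) : (1 : L) ∈ C ⊔ K ∙ 1)
  have := finrank_mono hVW
  omega

theorem finrank_finset_inf_comap_mulLeft_add_card_le
    (hKL : ¬ ∃ M : IntermediateField K L, M ≠ ⊥ ∧ FiniteDimensional K M)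
    {A B : Submodule K L} [FiniteDimensional K A] [FiniteDimensional K B] (hB : (1 : L) ∉ B)
    {ι : Type*} (a : Basis ι K A) {t : Finset ι} (ht : t.Nonempty) :
    finrank K ↥(t.inf fun i => (A.comap (LinearMap.mulLeft K (a i : L))).comap B.subtype) + #t ≤
      finrank K A := by
  set D : ι → Submodule K B := fun i => (A.comap (LinearMap.mulLeft K (a i : L))).comap B.subtype
  set C := (t.inf D).map B.subtype
  set V := span K (Set.range fun i : t => (a i : L))
  have hV : finrank K V = #t := by
    rw [finrank_span_eq_card, Fintype.card_coe]
    exact (a.linearIndependent.map' A.subtype A.ker_subtype).comp _ Subtype.val_injective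
  have hVCA : V * C ≤ A := by
    rw [← span_eq C, span_mul_span, span_le]
    rintro _ ⟨_, ⟨i, rfl⟩, _, ⟨c, hc, rfl⟩, rfl⟩
    exact Finset.inf_le (f := D) i.2 hc
  have := finrank_add_finrank_le_of_mul_le hKL (A := A) (V := V) (C := C)
    (fun h => ht.ne_empty (card_eq_zero.mp (by rw [← hV, h, finrank_bot])))
    (fun h => hB (map_subtype_le _ _ h))
    (span_le.mpr (by rintro _ ⟨i, rfl⟩; exact (a i).2)) hVCA
  rw [hV, finrank_map_subtype_eq] at this
  omega

theorem isMatchedBasis_of_forall_le_span {A B : Submodule K L} {n : ℕ}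
    (𝒜 : Basis (Fin n) K A) (ℬ : Basis (Fin n) K B)
    (h : ∀ i, (A.comap (LinearMap.mulLeft K (𝒜 i : L))).comap B.subtype ≤ span K (ℬ '' {i}ᶜ)) :
    IsMatchedBasis A B 𝒜 ℬ := by
  rintro i x ⟨hxA, hxB⟩
  have hx : (⟨x, hxB⟩ : B) ∈ span K (ℬ '' {i}ᶜ) := h i <| by
    rw [Set.mem_inv_smul_set_iff₀ (by simpa using 𝒜.ne_zero i)] at hxA
    simpa using hxA
  have := mem_map_of_mem (f := B.subtype) hx
  rwa [map_span, ← Set.image_comp, Set.image_eq_range] at this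

end FieldExtension

/-- **No proper finite intermediate extension implies the linear matching property.**
If a field extension `K ⊆ L` contains no intermediate field `M` with `K ⊊ M` and
`M` finite dimensional over `K`, then for any two `n`-dimensional `K`-subspaces
`A`, `B` of `L` with `n ≥ 1` and `1 ∉ B`, `A` is matched to `B`. -/
theorem linearMatchingProperty_of_no_finite_intermediateField
    {K L : Type*} [Field K] [Field L] [Algebra K L]
    (hKL : ¬ ∃ M : IntermediateField K L, M ≠ ⊥ ∧ FiniteDimensional K M)
    {n : ℕ} (hn : 1 ≤ n) (A B : Subspace K L)
    (hA : Module.finrank K A = n) (hB : Module.finrank K B = n)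
    (h1 : (1 : L) ∉ B) :
    IsMatchedTo A B := by
  intro m 𝒜
  obtain rfl : m = n := by simpa [hA] using (finrank_eq_card_basis 𝒜).symm
  have : FiniteDimensional K A := .of_finrank_pos (by omega)
  have : FiniteDimensional K B := .of_finrank_pos (by omega)
  obtain ⟨ℬ, hℬ⟩ := exists_basis_forall_le_span_image_compl (E := B)
    (by rw [Fintype.card_fin, hB]) _ fun t ht =>
      (finrank_finset_inf_comap_mulLeft_add_card_le hKL h1 𝒜 ht).trans_eq (hA.trans hB.symm)
  exact ⟨ℬ, isMatchedBasis_of_forall_le_span 𝒜 ℬ hℬ⟩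
end

section
/- Let K ⊆ L be a purely transcendental field extension. Then K ⊆ L satisfies the linear acyclic matching property: for every pair A, B of non-zero finite-dimensional K-subspaces of L with dim A = dim B and AB ∩ A = {0}, there exists at least one acyclic matching from A to B. -/
/-!
Because `AB ∩ A = 0`, every set `a⁻¹A ∩ B` with `a ≠ 0` is zero, so every isomorphism `A → B` is
a strong matching. If `a f(a) = φ(a) g(φ(a))` on `A`, polarising this quadratic identity shows
that for some `u ∈ L` either `φ = u · id` and `f = u · (g ∘ φ)`, or the two factors are swapped:
`φ = u · f` and `id = u · (g ∘ φ)`. In the first case `uA ⊆ A` makes `u` integral over `K`, hence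
`u ∈ K`, since `K` is algebraically closed in a purely transcendental extension; then `f = u² g`.
The second case forces `B = wA` for some `w`, and choosing `f` to be multiplication by `w`
whenever such a `w` exists reduces it to the first.
-/

open scoped Pointwise

/-- A strong matching from `A` to `B` is a `K`-linear isomorphism `φ : A → B` such that
every basis `𝒜` of `A` is matched to the basis `φ(𝒜)` of `B`. -/
def IsStrongMatching {K L : Type*} [Field K] [Field L] [Algebra K L]
    (A B : Subspace K L) (φ : A ≃ₗ[K] B) : Prop :=
  ∀ (n : ℕ) (𝒜 : Module.Basis (Fin n) K A), IsMatchedBasis A B 𝒜 (𝒜.map φ)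

/-- Two `K`-linear isomorphisms `f, g : A → B` are equivalent if there is a `K`-linear
automorphism `φ` of `A` with `a · f(a) = φ(a) · g(φ(a))` for all `a ∈ A`
(products taken in `L`). -/
def AreEquivalentIso {K L : Type*} [Field K] [Field L] [Algebra K L]
    (A B : Subspace K L) (f g : A ≃ₗ[K] B) : Prop :=
  ∃ φ : A ≃ₗ[K] A, ∀ a : A, (a : L) * (f a : L) = ((φ a : L)) * (g (φ a) : L)

/-- An acyclic matching from `A` to `B` is a strong matching `f : A → B` such that every
strong matching `g : A → B` equivalent to `f` satisfies `f = c • g` for some `c ∈ K`. -/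
def IsAcyclicLinearMatching {K L : Type*} [Field K] [Field L] [Algebra K L]
    (A B : Subspace K L) (f : A ≃ₗ[K] B) : Prop :=
  IsStrongMatching A B f ∧
    ∀ g : A ≃ₗ[K] B, IsStrongMatching A B g → AreEquivalentIso A B f g →
      ∃ c : K, ∀ a : A, f a = c • g a

theorem exists_mul_eq_of_forall_mul_eq_mul {V L : Type*} [AddCommMonoid V] [Nontrivial V]
    [Field L] (α β γ δ : V →+ L) (hα : Function.Injective α) (hδ : Function.Injective δ)
    (h : ∀ v, α v * β v = γ v * δ v) :
    ∃ u : L, ((∀ v, γ v = u * α v) ∧ ∀ v, β v = u * δ v) ∨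
      ((∀ v, γ v = u * β v) ∧ ∀ v, α v = u * δ v) := by
  have hα₀ : ∀ {v}, α v = 0 ↔ v = 0 := fun {_} => map_eq_zero_iff α hα
  have hcross : ∀ v w, α v * β w + α w * β v = γ v * δ w + γ w * δ v := by
    intro v w
    have hvw := h (v + w)
    simp only [map_add] at hvw
    linear_combination hvw - h v - h w
  have key : ∀ v w, γ v * α w = γ w * α v ∨ δ v * α w = δ w * α v := by
    intro v w
    have : (γ v * α w - γ w * α v) * (δ v * α w - δ w * α v) = 0 := by
      linear_combination (-(α w) ^ 2) * h v + (-(α v) ^ 2) * h w + (α v * α w) * hcross v w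
    simpa only [mul_eq_zero, sub_eq_zero] using this
  by_cases hγ : ∀ v w, γ v * α w = γ w * α v
  · obtain ⟨p, hp⟩ := exists_ne (0 : V)
    have hαp : α p ≠ 0 := hα₀.not.2 hp
    refine ⟨γ p / α p, Or.inl ⟨fun v => ?_, fun v => ?_⟩⟩
    · field_simp
      linear_combination hγ v p
    · rw [div_mul_eq_mul_div, eq_div_iff hαp]
      apply mul_left_cancel₀ hαp
      linear_combination α p * hcross v p - α v * h p + δ p * hγ v p
  · push Not at hγ
    obtain ⟨a, b, hab⟩ := hγ
    have hαa : α a ≠ 0 := fun h0 => hab (by simp [hα₀.1 h0])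
    have hαb : α b ≠ 0 := fun h0 => hab (by simp [hα₀.1 h0])
    have hδa : δ a ≠ 0 := (map_ne_zero_iff δ hδ).2 (fun h0 => hαa (by simp [h0]))
    have hδab : δ a * α b = δ b * α a := (key a b).resolve_left hab
    have hδ : ∀ v, δ v * α a = δ a * α v := by
      intro v
      by_cases hv : α v = 0
      · simp [hα₀.1 hv]
      rcases key v a with hva | hva
      · rcases key v b with hvb | hvb
        · exact absurd (mul_left_cancel₀ hv (by linear_combination α a * hvb - α b * hva)) hab
        · apply mul_left_cancel₀ hαb
          linear_combination α a * hvb - α v * hδab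
      · exact hva
    refine ⟨α a / δ a, Or.inr ⟨fun v => ?_, fun v => ?_⟩⟩
    · rw [div_mul_eq_mul_div, eq_div_iff hδa]
      apply mul_left_cancel₀ hαa
      linear_combination -(α a * hcross v a) + α v * h a - γ a * hδ v
    · field_simp
      linear_combination -hδ v

theorem AlgebraicIndependent.integralClosure_eq_bot {K L ι : Type*} [Field K] [Field L]
    [Algebra K L] {x : ι → L} (hx : AlgebraicIndependent K x)
    (htop : IntermediateField.adjoin K (Set.range x) = ⊤) : integralClosure K L = ⊥ := by
  refine eq_bot_iff.2 fun u hu => ?_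
  have hu_mem : u ∈ IntermediateField.adjoin K (Set.range x) := htop ▸ IntermediateField.mem_top
  obtain ⟨r, hr, s, hs, rfl⟩ := IntermediateField.mem_adjoin_iff_div.1 hu_mem
  rw [Algebra.adjoin_range_eq_range_aeval] at hr hs
  obtain ⟨p, rfl⟩ := hr
  obtain ⟨q, rfl⟩ := hs
  rcases eq_or_ne (MvPolynomial.aeval x q) 0 with hq | hq
  · simp [hq]
  obtain ⟨m, hm⟩ : ∃ m, q.coeff m ≠ 0 := MvPolynomial.ne_zero_iff.1 (by rintro rfl; simp at hq)
  set F := integralClosure K L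
  -- `x` stays algebraically independent over the integral closure `F`, which contains `p / q`
  have hzero :
      MvPolynomial.C (⟨_, hu⟩ : F) * q.map (algebraMap K F) - p.map (algebraMap K F) = 0 := by
    apply hx.integralClosure.eq_zero_of_aeval_eq_zero
    rw [map_sub, map_mul, MvPolynomial.aeval_C, MvPolynomial.aeval_map_algebraMap,
      MvPolynomial.aeval_map_algebraMap]
    simp [hq]
  have hcoeff := congrArg (fun P => algebraMap F L (P.coeff m)) hzero
  simp only [MvPolynomial.coeff_sub, MvPolynomial.coeff_C_mul, MvPolynomial.coeff_map, map_sub,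
    map_mul, MvPolynomial.coeff_zero, map_zero, ← IsScalarTower.algebraMap_apply,
    sub_eq_zero] at hcoeff
  refine Algebra.mem_bot.2 ⟨p.coeff m / q.coeff m, ?_⟩
  rw [map_div₀, div_eq_iff ((map_ne_zero _).2 hm)]
  exact hcoeff.symm

section

variable {K L : Type*} [Field K] [Field L] [Algebra K L] {A B : Subspace K L}

theorem isStrongMatching_of_mul_inf_eq_bot (h : A * B ⊓ A = ⊥) (f : A ≃ₗ[K] B) :
    IsStrongMatching A B f := by
  rintro n 𝒜 i _ ⟨⟨y, hy, rfl⟩, hyB⟩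
  have ha : (𝒜 i : L) ≠ 0 := by simpa using 𝒜.ne_zero i
  have hy_mul : y ∈ A * B ⊓ A := by
    refine ⟨?_, hy⟩
    simpa [mul_inv_cancel_left₀ ha] using Submodule.mul_mem_mul (𝒜 i).2 hyB
  rw [h, Submodule.mem_bot] at hy_mul
  simp [hy_mul]

theorem exists_eq_smul_of_forall_mul_eq (hK : integralClosure K L = ⊥) (hA : A ≠ ⊥)
    [FiniteDimensional K A] (f g : A →ₗ[K] B) (φ : A →ₗ[K] A) (u : L)
    (hφ : ∀ a, (φ a : L) = u * a) (hf : ∀ a, (f a : L) = u * g (φ a)) :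
    ∃ c : K, ∀ a, f a = c • g a := by
  have hu : IsIntegral K u :=
    isIntegral_of_smul_mem_submodule A hA (Module.Finite.iff_fg.mp ‹_›) u fun a ha => by
      simpa [hφ] using (φ ⟨a, ha⟩).2
  obtain ⟨c, rfl⟩ : u ∈ Set.range (algebraMap K L) := by
    rw [← Algebra.mem_bot, ← hK]
    exact hu
  have hφc : ∀ a, φ a = c • a := fun a => Subtype.ext (by simp [hφ, Algebra.smul_def])
  refine ⟨c ^ 2, fun a => Subtype.ext ?_⟩
  rw [hf, hφc, map_smul]
  simp only [SetLike.val_smul, Algebra.smul_def, map_pow]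
  ring

theorem isAcyclicLinearMatching_of_mul_inf_eq_bot (hK : integralClosure K L = ⊥) (hA : A ≠ ⊥)
    [FiniteDimensional K A] (h : A * B ⊓ A = ⊥) (f : A ≃ₗ[K] B)
    (hf : ∀ (φ : A ≃ₗ[K] A) (u : L), (∀ a, (φ a : L) = u * f a) →
      ∃ w : L, ∀ a, (f a : L) = w * a) :
    IsAcyclicLinearMatching A B f := by
  refine ⟨isStrongMatching_of_mul_inf_eq_bot h f, fun g _ ⟨φ, hφ⟩ => ?_⟩
  have : Nontrivial A := Submodule.nontrivial_iff_ne_bot.2 hA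
  obtain ⟨u, ⟨hφu, hfu⟩ | ⟨hφu, hau⟩⟩ := exists_mul_eq_of_forall_mul_eq_mul
    A.subtype.toAddMonoidHom (B.subtype ∘ₗ (f : A →ₗ[K] B)).toAddMonoidHom
    (A.subtype ∘ₗ (φ : A →ₗ[K] A)).toAddMonoidHom
    (B.subtype ∘ₗ (g : A →ₗ[K] B) ∘ₗ (φ : A →ₗ[K] A)).toAddMonoidHom Subtype.val_injective
    (Subtype.val_injective.comp (g.injective.comp φ.injective)) hφ
  all_goals simp only [LinearMap.toAddMonoidHom_coe, LinearMap.coe_comp, LinearEquiv.coe_coe,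
    Function.comp_apply, Submodule.coe_subtype] at *
  · exact exists_eq_smul_of_forall_mul_eq hK hA (f : A →ₗ[K] B) g φ u hφu hfu
  · obtain ⟨w, hw⟩ := hf φ u hφu
    refine exists_eq_smul_of_forall_mul_eq hK hA (f : A →ₗ[K] B) g φ (u * w)
      (fun a => ?_) (fun a => ?_)
    · simp only [LinearEquiv.coe_coe, hφu, hw, mul_assoc]
    · simp only [LinearEquiv.coe_coe, hw]
      rw [hau a, mul_left_comm, mul_assoc]

theorem exists_linearEquiv_eq_mul_of_forall_eq_mul [FiniteDimensional K A]
    [FiniteDimensional K B] (hdim : Module.finrank K A = Module.finrank K B) :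
    ∃ f : A ≃ₗ[K] B, ∀ (φ : A ≃ₗ[K] A) (u : L), (∀ a, (φ a : L) = u * f a) →
      ∃ w : L, ∀ a, (f a : L) = w * a := by
  by_cases hmul : ∃ (f : A ≃ₗ[K] B) (w : L), ∀ a, (f a : L) = w * a
  · obtain ⟨f, w, hw⟩ := hmul
    exact ⟨f, fun _ _ _ => ⟨w, hw⟩⟩
  refine ⟨LinearEquiv.ofFinrankEq A B hdim, fun φ u hφu => ?_⟩
  rcases eq_or_ne u 0 with rfl | hu
  · refine ⟨0, fun a => ?_⟩
    have : a = 0 := φ.map_eq_zero_iff.1 (Subtype.ext (by simp [hφu]))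
    simp [this]
  · refine absurd ⟨φ.symm.trans (LinearEquiv.ofFinrankEq A B hdim), u⁻¹, fun a => ?_⟩ hmul
    have := hφu (φ.symm a)
    simp only [LinearEquiv.apply_symm_apply] at this
    simp [this, hu]

end

theorem purelyTranscendental_hasLinearAcyclicMatchingProperty_general
    {K L : Type*} [Field K] [Field L] [Algebra K L]
    (hKL : ∃ S : Set L, AlgebraicIndependent K ((↑) : S → L) ∧
      IntermediateField.adjoin K S = ⊤)
    (A B : Subspace K L) (hA : A ≠ ⊥)
    (hfinA : FiniteDimensional K A) (hfinB : FiniteDimensional K B)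
    (hdim : Module.finrank K A = Module.finrank K B)
    (h : A * B ⊓ A = ⊥) :
    ∃ f : A ≃ₗ[K] B, IsAcyclicLinearMatching A B f := by
  obtain ⟨S, hS, htop⟩ := hKL
  have hK : integralClosure K L = ⊥ := hS.integralClosure_eq_bot (by rwa [Subtype.range_coe])
  obtain ⟨f, hf⟩ := exists_linearEquiv_eq_mul_of_forall_eq_mul hdim
  exact ⟨f, isAcyclicLinearMatching_of_mul_inf_eq_bot hK hA h f hf⟩

/-- **Purely transcendental extensions have the linear acyclic matching property.**
If `L = K(S)` for some algebraically independent set `S` over `K`, then for every pair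
`A`, `B` of non-zero `K`-subspaces of `L` of equal finite dimension with `AB ∩ A = {0}`,
there exists an acyclic matching from `A` to `B`. -/
theorem purelyTranscendental_hasLinearAcyclicMatchingProperty
    {K L : Type*} [Field K] [Field L] [Algebra K L]
    (hKL : ∃ S : Set L, AlgebraicIndependent K ((↑) : S → L) ∧
      IntermediateField.adjoin K S = ⊤)
    (A B : Subspace K L) (hA : A ≠ ⊥) (hB : B ≠ ⊥)
    (hfinA : FiniteDimensional K A) (hfinB : FiniteDimensional K B)
    (hdim : Module.finrank K A = Module.finrank K B)
    (h : A * B ⊓ A = ⊥) :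
    ∃ f : A ≃ₗ[K] B, IsAcyclicLinearMatching A B f :=
  purelyTranscendental_hasLinearAcyclicMatchingProperty_general hKL A B hA hfinA hfinB hdim h
end
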